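/- Let A be an n×n nonnegative real matrix with all row sums nonzero, let L ≥ 1 and k ≥ 0 be integers, and let α be a real number with 0 ≤ α ≤ 1. Write a_{ij}^{(L)} for the (i,j) entry of A^L. Then min over pairs (i,j) with a_{ij}^{(L)} > 0 of ( r_i(A^{k+L})^α r_j(A^{k+L})^{1−α} ) / ( r_i(A^k)^α r_j(A^k)^{1−α} ) ≤ ρ(A)^L ≤ max over pairs (i,j) with a_{ij}^{(L)} > 0 of ( r_i(A^{k+L})^α r_j(A^{k+L})^{1−α} ) / ( r_i(A^k)^α r_j(A^k)^{1−α} ). -/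

import Mathlib

/-!
Put `s = r(A^k)`, `R = r(A^{k+L}) = A^L s` and `w_j = s_j^α R_j^(1-α)`. The matrix
`E = D⁻¹ A^L D`, `D = diag w`, is similar to `A^L`, and its `i`-th row sum
`(A^L w)_i / w_i = ∑_j (a_{ij}^{(L)} s_j / R_i) q_{ij}` is a convex combination of the quotients
`q_{ij}` of the theorem over the pairs with `a_{ij}^{(L)} > 0`. The spectral radius of a nonnegative
matrix lies between its smallest and largest row sums: the largest bounds the `∞`-operator norm,
and the smallest `m` gives `‖E^p‖ ≥ m^p`, hence `m ≤ ρ(E)` by Gelfand's formula. Finally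
`ρ(A^L) = ρ(A)^L` by the spectral mapping theorem.
-/

open Matrix

/-- The spectral radius of a real square matrix: the maximum modulus of its
complex eigenvalues (elements of the spectrum of the matrix over `ℂ`). -/
noncomputable def specRad {n : ℕ} (A : Matrix (Fin n) (Fin n) ℝ) : ℝ :=
  sSup ((fun μ : ℂ => ‖μ‖) '' spectrum ℂ (A.map (fun x : ℝ => (x : ℂ))))

/-- `rowSum A i` is the `i`-th row sum of `A`. -/
noncomputable def rowSum {n : ℕ} (A : Matrix (Fin n) (Fin n) ℝ) (i : Fin n) : ℝ :=
  ∑ j, A i j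

/-- A square matrix is irreducible if it cannot be symmetrically permuted to a
nontrivial block upper-triangular form; equivalently, for every nonempty proper
subset `S` of indices there is a nonzero entry leading from `S` to its complement. -/
def IsIrred {n : ℕ} (A : Matrix (Fin n) (Fin n) ℝ) : Prop :=
  ∀ S : Set (Fin n), S.Nonempty → S ≠ Set.univ → ∃ i ∈ S, ∃ j ∈ Sᶜ, A i j ≠ 0

section RowSum

variable {n : ℕ}

lemma rowSum_eq_mulVec_one (X : Matrix (Fin n) (Fin n) ℝ) : rowSum X = X *ᵥ 1 :=
  funext fun i => (dotProduct_one (X i)).symm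

lemma rowSum_mul (M N : Matrix (Fin n) (Fin n) ℝ) : rowSum (M * N) = M *ᵥ rowSum N := by
  simp only [rowSum_eq_mulVec_one, mulVec_mulVec]

lemma mulVec_pos {B : Matrix (Fin n) (Fin n) ℝ} {v : Fin n → ℝ} (hB : ∀ i j, 0 ≤ B i j)
    (hr : ∀ i, rowSum B i ≠ 0) (hv : ∀ j, 0 < v j) (i : Fin n) : 0 < (B *ᵥ v) i := by
  obtain ⟨j, -, hj⟩ : ∃ j ∈ Finset.univ, B i j ≠ 0 := Finset.exists_ne_zero_of_sum_ne_zero (hr i)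
  exact Finset.sum_pos' (fun l _ => mul_nonneg (hB i l) (hv l).le)
    ⟨j, Finset.mem_univ j, mul_pos ((hB i j).lt_of_ne' hj) (hv j)⟩

lemma rowSum_pow_pos {A : Matrix (Fin n) (Fin n) ℝ} (hA : ∀ i j, 0 ≤ A i j)
    (hr : ∀ i, rowSum A i ≠ 0) (k : ℕ) (i : Fin n) : 0 < rowSum (A ^ k) i := by
  induction k generalizing i with
  | zero => simp [rowSum, one_apply]
  | succ k ih => rw [pow_succ', rowSum_mul]; exact mulVec_pos hA hr ih i

lemma pow_le_rowSum_pow {X : Matrix (Fin n) (Fin n) ℝ} (hX : ∀ i j, 0 ≤ X i j) {m : ℝ}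
    (hm : 0 ≤ m) (h : ∀ i, m ≤ rowSum X i) (p : ℕ) (i : Fin n) : m ^ p ≤ rowSum (X ^ p) i := by
  induction p generalizing i with
  | zero => simp [rowSum, one_apply]
  | succ p ih =>
    rw [pow_succ' m, pow_succ' X, rowSum_mul]
    calc m * m ^ p ≤ rowSum X i * m ^ p := by gcongr; exact h i
      _ = ∑ j, X i j * m ^ p := Finset.sum_mul ..
      _ ≤ (X *ᵥ rowSum (X ^ p)) i := Finset.sum_le_sum fun j _ => by gcongr; exacts [hX i j, ih j]

end RowSum

section SpectralRadius

attribute [local instance] Matrix.linftyOpNormedRing Matrix.linftyOpNormedAlgebra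

variable {n : ℕ}

lemma map_ofReal_pow (X : Matrix (Fin n) (Fin n) ℝ) (p : ℕ) :
    (X ^ p).map (fun x : ℝ => (x : ℂ)) = X.map (fun x : ℝ => (x : ℂ)) ^ p :=
  Matrix.map_pow X Complex.ofRealHom p

lemma nnnorm_row_map_ofReal {X : Matrix (Fin n) (Fin n) ℝ} (hX : ∀ i j, 0 ≤ X i j) (i : Fin n) :
    ((∑ j, ‖X.map (fun x : ℝ => (x : ℂ)) i j‖₊ : NNReal) : ℝ) = rowSum X i := by
  push_cast
  exact Finset.sum_congr rfl fun j _ => by simp [abs_of_nonneg (hX i j)]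

lemma rowSum_le_norm_map_ofReal {X : Matrix (Fin n) (Fin n) ℝ} (hX : ∀ i j, 0 ≤ X i j)
    (i : Fin n) : rowSum X i ≤ ‖X.map (fun x : ℝ => (x : ℂ))‖ := by
  rw [linfty_opNorm_def, ← nnnorm_row_map_ofReal hX i, NNReal.coe_le_coe]
  exact Finset.le_sup (f := fun i => ∑ j, ‖X.map (fun x : ℝ => (x : ℂ)) i j‖₊) (Finset.mem_univ i)

lemma norm_map_ofReal_le {X : Matrix (Fin n) (Fin n) ℝ} (hX : ∀ i j, 0 ≤ X i j) {M : ℝ}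
    (hM : 0 ≤ M) (h : ∀ i, rowSum X i ≤ M) : ‖X.map (fun x : ℝ => (x : ℂ))‖ ≤ M := by
  rw [linfty_opNorm_def, ← Real.coe_toNNReal M hM, NNReal.coe_le_coe]
  refine Finset.sup_le fun i _ => ?_
  rw [← NNReal.coe_le_coe, Real.coe_toNNReal M hM, nnnorm_row_map_ofReal hX i]
  exact h i

lemma specRad_nonneg (A : Matrix (Fin n) (Fin n) ℝ) : 0 ≤ specRad A :=
  Real.sSup_nonneg (by rintro _ ⟨μ, -, rfl⟩; exact norm_nonneg μ)

lemma norm_le_specRad {A : Matrix (Fin n) (Fin n) ℝ} {μ : ℂ}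
    (hμ : μ ∈ spectrum ℂ (A.map (fun x : ℝ => (x : ℂ)))) : ‖μ‖ ≤ specRad A :=
  le_csSup ((spectrum.isCompact _).image continuous_norm).bddAbove ⟨μ, hμ, rfl⟩

lemma exists_norm_eq_specRad {A : Matrix (Fin n) (Fin n) ℝ}
    (h : (spectrum ℂ (A.map (fun x : ℝ => (x : ℂ)))).Nonempty) :
    ∃ μ ∈ spectrum ℂ (A.map (fun x : ℝ => (x : ℂ))), ‖μ‖ = specRad A := by
  obtain ⟨μ, hμ, heq⟩ := (spectrum.isCompact _).exists_sSup_image_eq h continuous_norm.continuousOn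
  exact ⟨μ, hμ, heq.symm⟩

lemma specRad_pow (A : Matrix (Fin n) (Fin n) ℝ) {L : ℕ} (hL : L ≠ 0) :
    specRad (A ^ L) = specRad A ^ L := by
  have hσ : spectrum ℂ ((A ^ L).map (fun x : ℝ => (x : ℂ))) =
      (· ^ L) '' spectrum ℂ (A.map (fun x : ℝ => (x : ℂ))) := by
    rw [map_ofReal_pow, spectrum.map_pow_of_pos _ (Nat.pos_of_ne_zero hL)]
  refine le_antisymm (Real.sSup_le ?_ (pow_nonneg (specRad_nonneg A) L)) ?_
  · rintro _ ⟨_, hν, rfl⟩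
    rw [hσ] at hν
    obtain ⟨μ, hμ, rfl⟩ := hν
    dsimp only
    rw [norm_pow]
    exact pow_le_pow_left₀ (norm_nonneg μ) (norm_le_specRad hμ) L
  · rcases (spectrum ℂ (A.map (fun x : ℝ => (x : ℂ)))).eq_empty_or_nonempty with hempty | hne
    · rw [specRad, hempty, Set.image_empty, Real.sSup_empty, zero_pow hL]
      exact specRad_nonneg _
    obtain ⟨μ, hμ, hμA⟩ := exists_norm_eq_specRad hne
    rw [← hμA, ← norm_pow]
    exact norm_le_specRad (hσ ▸ Set.mem_image_of_mem _ hμ)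

lemma specRad_le_of_rowSum_le {X : Matrix (Fin n) (Fin n) ℝ} (hX : ∀ i j, 0 ≤ X i j) {M : ℝ}
    (hM : 0 ≤ M) (h : ∀ i, rowSum X i ≤ M) : specRad X ≤ M := by
  refine Real.sSup_le ?_ hM
  rintro _ ⟨μ, hμ, rfl⟩
  cases isEmpty_or_nonempty (Fin n)
  · simp [spectrum.of_subsingleton] at hμ
  · exact (spectrum.norm_le_norm_of_mem hμ).trans (norm_map_ofReal_le hX hM h)

lemma le_specRad_of_le_rowSum [Nonempty (Fin n)] {X : Matrix (Fin n) (Fin n) ℝ}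
    (hX : ∀ i j, 0 ≤ X i j) {m : ℝ} (hm : 0 ≤ m) (h : ∀ i, m ≤ rowSum X i) : m ≤ specRad X := by
  set Xc := X.map (fun x : ℝ => (x : ℂ))
  have hgelfand : ENNReal.ofReal m ≤ spectralRadius ℂ Xc := by
    refine ge_of_tendsto (spectrum.pow_norm_pow_one_div_tendsto_nhds_spectralRadius Xc) ?_
    filter_upwards [Filter.eventually_ne_atTop 0] with p hp
    refine ENNReal.ofReal_le_ofReal ?_
    have hmp : m ^ p ≤ ‖Xc ^ p‖ := by
      rw [← map_ofReal_pow]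
      exact (pow_le_rowSum_pow hX hm h p (Classical.arbitrary _)).trans
        (rowSum_le_norm_map_ofReal (pow_apply_nonneg hX p) _)
    calc m = (m ^ p) ^ (1 / p : ℝ) := by
          rw [← Real.rpow_natCast, ← Real.rpow_mul hm, mul_one_div_cancel (by exact_mod_cast hp),
            Real.rpow_one]
      _ ≤ ‖Xc ^ p‖ ^ (1 / p : ℝ) := by gcongr
  obtain ⟨μ, hμ, hμρ⟩ := spectrum.exists_nnnorm_eq_spectralRadius Xc
  rw [← hμρ, ← enorm_eq_nnnorm, ← ofReal_norm, ENNReal.ofReal_le_ofReal_iff (norm_nonneg μ)]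
    at hgelfand
  exact hgelfand.trans (norm_le_specRad hμ)

lemma specRad_diagonal_conj (X : Matrix (Fin n) (Fin n) ℝ) {w : Fin n → ℝ} (hw : ∀ i, w i ≠ 0) :
    specRad (of fun i j => X i j * w j / w i) = specRad X := by
  let d : Fin n → ℂ := fun i => (w i : ℂ)
  have hd : ∀ i, d i ≠ 0 := fun i => Complex.ofReal_ne_zero.mpr (hw i)
  let u : (Matrix (Fin n) (Fin n) ℂ)ˣ :=
    ⟨diagonal d, diagonal d⁻¹, by simp [hd], by simp [hd]⟩
  have hconj : (of fun i j => X i j * w j / w i).map (fun x : ℝ => (x : ℂ)) =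
      (↑u⁻¹ : Matrix (Fin n) (Fin n) ℂ) * X.map (fun x : ℝ => (x : ℂ)) *
        (u : Matrix (Fin n) (Fin n) ℂ) := by
    ext i j
    simp [u, d, div_eq_mul_inv]
    ring
  simp only [specRad, hconj, spectrum.units_conjugate']

end SpectralRadius

section WeightedAverage

variable {ι : Type*} [Fintype ι] {c v q : ι → ℝ}

lemma sum_mul_mul_le_of_forall_pos_imp {M : ℝ} (hc : ∀ j, 0 ≤ c j) (hv : ∀ j, 0 ≤ v j)
    (h : ∀ j, 0 < c j → q j ≤ M) : ∑ j, c j * (v j * q j) ≤ M * ∑ j, c j * v j := by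
  rw [Finset.mul_sum]
  refine Finset.sum_le_sum fun j _ => ?_
  rcases (hc j).eq_or_lt with h0 | hpos
  · simp [← h0]
  · calc c j * (v j * q j) ≤ c j * (v j * M) :=
          mul_le_mul_of_nonneg_left (mul_le_mul_of_nonneg_left (h j hpos) (hv j)) (hc j)
      _ = M * (c j * v j) := by ring

lemma le_sum_mul_mul_of_forall_pos_imp {m : ℝ} (hc : ∀ j, 0 ≤ c j) (hv : ∀ j, 0 ≤ v j)
    (h : ∀ j, 0 < c j → m ≤ q j) : m * ∑ j, c j * v j ≤ ∑ j, c j * (v j * q j) := by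
  rw [Finset.mul_sum]
  refine Finset.sum_le_sum fun j _ => ?_
  rcases (hc j).eq_or_lt with h0 | hpos
  · simp [← h0]
  · calc m * (c j * v j) = c j * (v j * m) := by ring
      _ ≤ c j * (v j * q j) :=
          mul_le_mul_of_nonneg_left (mul_le_mul_of_nonneg_left (h j hpos) (hv j)) (hc j)

end WeightedAverage

section CollatzWielandt

variable {n : ℕ}

lemma rowSum_diagonal_conj (X : Matrix (Fin n) (Fin n) ℝ) (w : Fin n → ℝ) (i : Fin n) :
    rowSum (of fun i j => X i j * w j / w i) i = (X *ᵥ w) i / w i := by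
  simp only [rowSum, of_apply, mulVec, dotProduct, Finset.sum_div]

lemma diagonal_conj_nonneg {X : Matrix (Fin n) (Fin n) ℝ} (hX : ∀ i j, 0 ≤ X i j)
    {w : Fin n → ℝ} (hw : ∀ i, 0 < w i) (i j : Fin n) :
    0 ≤ (of fun i j => X i j * w j / w i : Matrix (Fin n) (Fin n) ℝ) i j :=
  div_nonneg (mul_nonneg (hX i j) (hw j).le) (hw i).le

theorem le_specRad_of_le_mulVec_div [Nonempty (Fin n)] {X : Matrix (Fin n) (Fin n) ℝ}
    (hX : ∀ i j, 0 ≤ X i j) {w : Fin n → ℝ} (hw : ∀ i, 0 < w i) {m : ℝ} (hm : 0 ≤ m)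
    (h : ∀ i, m ≤ (X *ᵥ w) i / w i) : m ≤ specRad X := by
  rw [← specRad_diagonal_conj X fun i => (hw i).ne']
  exact le_specRad_of_le_rowSum (diagonal_conj_nonneg hX hw) hm fun i =>
    (rowSum_diagonal_conj X w i).symm ▸ h i

theorem specRad_le_of_mulVec_div_le {X : Matrix (Fin n) (Fin n) ℝ} (hX : ∀ i j, 0 ≤ X i j)
    {w : Fin n → ℝ} (hw : ∀ i, 0 < w i) {M : ℝ} (hM : 0 ≤ M)
    (h : ∀ i, (X *ᵥ w) i / w i ≤ M) : specRad X ≤ M := by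
  rw [← specRad_diagonal_conj X fun i => (hw i).ne']
  exact specRad_le_of_rowSum_le (diagonal_conj_nonneg hX hw) hM fun i =>
    (rowSum_diagonal_conj X w i).symm ▸ h i

end CollatzWielandt

section MixedRatio

variable {ι : Type*}

lemma finite_setOf_exists_eq [Finite ι] (P : ι → ι → Prop) (f : ι → ι → ℝ) :
    {x | ∃ i j, P i j ∧ x = f i j}.Finite :=
  (Set.finite_range (Function.uncurry f)).subset fun _ ⟨i, j, _, hx⟩ => ⟨(i, j), hx.symm⟩

/-- With `s = r(A^k)` and `R = r(A^{k+L})` this is the quotient bounding `ρ(A)^L` in the theorem. -/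
noncomputable def mixedRatio (s R : ι → ℝ) (α : ℝ) (i j : ι) : ℝ :=
  R i ^ α * R j ^ (1 - α) / (s i ^ α * s j ^ (1 - α))

noncomputable def mixedWeight (s R : ι → ℝ) (α : ℝ) (j : ι) : ℝ :=
  s j ^ α * R j ^ (1 - α)

variable {s R : ι → ℝ}

lemma mixedRatio_nonneg (hs : ∀ i, 0 ≤ s i) (hR : ∀ i, 0 ≤ R i) (α : ℝ) (i j : ι) :
    0 ≤ mixedRatio s R α i j := by
  have := hs i; have := hs j; have := hR i; have := hR j
  unfold mixedRatio; positivity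

lemma mixedWeight_pos (hs : ∀ i, 0 < s i) (hR : ∀ i, 0 < R i) (α : ℝ) (j : ι) :
    0 < mixedWeight s R α j := by
  have := hs j; have := hR j
  unfold mixedWeight; positivity

lemma mixedWeight_div_mixedWeight (hs : ∀ i, 0 < s i) (hR : ∀ i, 0 < R i) (α : ℝ)
    (i j : ι) :
    mixedWeight s R α j / mixedWeight s R α i = s j * mixedRatio s R α i j / R i := by
  have := hs i; have := hs j; have := hR i; have := hR j
  simp only [mixedWeight, mixedRatio, Real.rpow_sub (hs j), Real.rpow_sub (hR i),
    Real.rpow_sub (hR j), Real.rpow_one]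
  field_simp

end MixedRatio

section Kolotilina

variable {n : ℕ} {B : Matrix (Fin n) (Fin n) ℝ} {s : Fin n → ℝ}

lemma mulVec_mixedWeight_div (hs : ∀ i, 0 < s i) (hBs : ∀ i, 0 < (B *ᵥ s) i) (α : ℝ)
    (i : Fin n) :
    (B *ᵥ mixedWeight s (B *ᵥ s) α) i / mixedWeight s (B *ᵥ s) α i =
      (∑ j, B i j * (s j * mixedRatio s (B *ᵥ s) α i j)) / (B *ᵥ s) i := by
  simp only [mulVec, dotProduct, Finset.sum_div, mul_div_assoc,
    mixedWeight_div_mixedWeight hs hBs]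

theorem sInf_mixedRatio_le_specRad (hB : ∀ i j, 0 ≤ B i j) (hs : ∀ i, 0 < s i)
    (hBs : ∀ i, 0 < (B *ᵥ s) i) (α : ℝ) :
    sInf {x | ∃ i j, 0 < B i j ∧ x = mixedRatio s (B *ᵥ s) α i j} ≤ specRad B := by
  set S := {x | ∃ i j, 0 < B i j ∧ x = mixedRatio s (B *ᵥ s) α i j}
  rcases S.eq_empty_or_nonempty with hS | ⟨-, i, -⟩
  · rw [hS, Real.sInf_empty]
    exact specRad_nonneg B
  have : Nonempty (Fin n) := ⟨i⟩
  have hS0 : ∀ x ∈ S, 0 ≤ x := by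
    rintro _ ⟨i, j, -, rfl⟩
    exact mixedRatio_nonneg (fun i => (hs i).le) (fun i => (hBs i).le) α i j
  refine le_specRad_of_le_mulVec_div hB (mixedWeight_pos hs hBs α) (Real.sInf_nonneg hS0)
    fun i => ?_
  rw [mulVec_mixedWeight_div hs hBs, le_div_iff₀ (hBs i)]
  exact le_sum_mul_mul_of_forall_pos_imp (hB i) (fun j => (hs j).le) fun j hj =>
    csInf_le (finite_setOf_exists_eq _ _).bddBelow ⟨i, j, hj, rfl⟩

theorem specRad_le_sSup_mixedRatio (hB : ∀ i j, 0 ≤ B i j) (hs : ∀ i, 0 < s i)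
    (hBs : ∀ i, 0 < (B *ᵥ s) i) (α : ℝ) :
    specRad B ≤ sSup {x | ∃ i j, 0 < B i j ∧ x = mixedRatio s (B *ᵥ s) α i j} := by
  set S := {x | ∃ i j, 0 < B i j ∧ x = mixedRatio s (B *ᵥ s) α i j}
  have hS0 : ∀ x ∈ S, 0 ≤ x := by
    rintro _ ⟨i, j, -, rfl⟩
    exact mixedRatio_nonneg (fun i => (hs i).le) (fun i => (hBs i).le) α i j
  refine specRad_le_of_mulVec_div_le hB (mixedWeight_pos hs hBs α) (Real.sSup_nonneg hS0)
    fun i => ?_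
  rw [mulVec_mixedWeight_div hs hBs, div_le_iff₀ (hBs i)]
  exact sum_mul_mul_le_of_forall_pos_imp (hB i) (fun j => (hs j).le) fun j hj =>
    le_csSup (finite_setOf_exists_eq _ _).bddAbove ⟨i, j, hj, rfl⟩

end Kolotilina

theorem stmt9_general {n : ℕ} (A : Matrix (Fin n) (Fin n) ℝ)
    (hA : ∀ i j, 0 ≤ A i j) (hr : ∀ i, rowSum A i ≠ 0) (L k : ℕ) (hL : 1 ≤ L)
    (α : ℝ) :
    sInf {x : ℝ | ∃ i j : Fin n, 0 < (A ^ L) i j ∧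
        x = rowSum (A ^ (k + L)) i ^ α * rowSum (A ^ (k + L)) j ^ (1 - α) /
              (rowSum (A ^ k) i ^ α * rowSum (A ^ k) j ^ (1 - α))} ≤ specRad A ^ L ∧
    specRad A ^ L ≤ sSup {x : ℝ | ∃ i j : Fin n, 0 < (A ^ L) i j ∧
        x = rowSum (A ^ (k + L)) i ^ α * rowSum (A ^ (k + L)) j ^ (1 - α) /
              (rowSum (A ^ k) i ^ α * rowSum (A ^ k) j ^ (1 - α))} := by
  have hrow : rowSum (A ^ (k + L)) = A ^ L *ᵥ rowSum (A ^ k) := by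
    rw [add_comm, pow_add, rowSum_mul]
  have hB := pow_apply_nonneg hA L
  have hs := rowSum_pow_pos hA hr k
  have hBs : ∀ i, 0 < (A ^ L *ᵥ rowSum (A ^ k)) i := hrow ▸ rowSum_pow_pos hA hr (k + L)
  rw [hrow, ← specRad_pow A (by omega)]
  exact ⟨sInf_mixedRatio_le_specRad hB hs hBs α, specRad_le_sSup_mixedRatio hB hs hBs α⟩

/-- inequality (9) of the paper — Kolotilina's bound applied to `D⁻¹AᴸD`.
For a nonnegative matrix `A` with all row sums nonzero, integers `L ≥ 1`, `k ≥ 0`, and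
`0 ≤ α ≤ 1`, `ρ(A)^L` is bounded below and above by the min resp. max over pairs `(i,j)`
with `(A^L)_{ij} > 0` of `(r_i(A^{k+L})^α r_j(A^{k+L})^{1-α}) / (r_i(A^k)^α r_j(A^k)^{1-α})`. -/
theorem stmt9 {n : ℕ} (A : Matrix (Fin n) (Fin n) ℝ)
    (hA : ∀ i j, 0 ≤ A i j) (hr : ∀ i, rowSum A i ≠ 0) (L k : ℕ) (hL : 1 ≤ L)
    (α : ℝ) (hα0 : 0 ≤ α) (hα1 : α ≤ 1) :
    sInf {x : ℝ | ∃ i j : Fin n, 0 < (A ^ L) i j ∧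
        x = rowSum (A ^ (k + L)) i ^ α * rowSum (A ^ (k + L)) j ^ (1 - α) /
              (rowSum (A ^ k) i ^ α * rowSum (A ^ k) j ^ (1 - α))} ≤ specRad A ^ L ∧
    specRad A ^ L ≤ sSup {x : ℝ | ∃ i j : Fin n, 0 < (A ^ L) i j ∧
        x = rowSum (A ^ (k + L)) i ^ α * rowSum (A ^ (k + L)) j ^ (1 - α) /
              (rowSum (A ^ k) i ^ α * rowSum (A ^ k) j ^ (1 - α))} :=
  stmt9_general A hA hr L k hL α
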